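/- arXiv:1103.1720 — 3 statements merged into one kernel-verified Lean document; each statement's English description precedes it below -/
import Mathlib

section
/- Let L : X → Y be a left-Fredholm operator between Banach spaces with closed splitting Y = R(L) ⊕ Y₂, let (zₙ) be an infinite linearly independent family contained in Y₂, and let K : X → Y be a compact operator. Then the subspace R(L+K) ∩ Y₂ is finite-dimensional; in particular, for any integer p one can choose finitely many indices n₁ < … < n_q with q > p such that the span Z of z_{n₁},…,z_{n_q} satisfies Z ∩ R(L+K) = {0}. -/
/-!
Let `P` be the continuous projection onto `R(L)` along `Y₂`. If `(L + K) x ∈ Y₂` then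
`P ((L + K) x) = (L + P K) x = 0`, so `R(L + K) ∩ Y₂` is the image of `ker (L + P K)`. Since `P K`
is compact, this kernel is finite-dimensional: on it, `x = π x + S (L x) = π x - S (P K x)`, where
`π` projects onto the finite-dimensional `ker L` and `S` is the bounded inverse of `L` on a closed
complement of `ker L` (open mapping theorem), so the identity of the kernel is a compact operator.
Finally, `R(L + K) ∩ span {z n}` is finite-dimensional, hence spanned by finitely many `z n`,
and by linear independence any span of the remaining `z n` meets `R(L + K)` trivially.
-/

open Set Submodule

section

variable {𝕜 E F : Type*} [NontriviallyNormedField 𝕜]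
  [NormedAddCommGroup E] [NormedSpace 𝕜 E] [CompleteSpace E]
  [NormedAddCommGroup F] [NormedSpace 𝕜 F] [CompleteSpace F]

theorem ContinuousLinearMap.exists_comp_rangeRestrict_eq_sub (L : E →L[𝕜] F)
    (hL : IsClosed (L.range : Set F)) (π : E →L[𝕜] L.ker) (hπ : ∀ x : L.ker, π x = x) :
    ∃ S : L.range →L[𝕜] E, ∀ x, S (L.rangeRestrict x) = x - π x := by
  have : CompleteSpace π.ker := π.isClosed_ker.completeSpace_coe
  have : CompleteSpace L.range := hL.completeSpace_coe
  let x₁ (x : E) : π.ker := ⟨x - π x, by simp [hπ]⟩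
  let L₁ := L.rangeRestrict ∘L π.ker.subtypeL
  have hL₁ (x : E) : L₁ (x₁ x) = L.rangeRestrict x := by ext; simp [L₁, x₁]
  have hinj : L₁.ker = ⊥ := by
    refine (LinearMap.ker_eq_bot' (f := (L₁ : π.ker →ₗ[𝕜] L.range))).2 fun ⟨x, hx⟩ hLx => ?_
    have hπx : (π x : E) = x := congrArg Subtype.val (hπ ⟨x, congrArg Subtype.val hLx⟩)
    have hπx' : (π x : E) = 0 := congrArg Subtype.val (show π x = 0 from hx)
    exact Subtype.ext (hπx.symm.trans hπx')
  have hsurj : L₁.range = ⊤ := by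
    refine LinearMap.range_eq_top.2 ?_
    rintro ⟨_, x, rfl⟩
    exact ⟨x₁ x, hL₁ x⟩
  let e := ContinuousLinearEquiv.ofBijective L₁ hinj hsurj
  refine ⟨π.ker.subtypeL ∘L e.symm, fun x => ?_⟩
  show ((e.symm (L.rangeRestrict x) : π.ker) : E) = x - π x
  rw [e.symm_apply_eq.2 (hL₁ x).symm]

theorem ContinuousLinearMap.finiteDimensional_ker_add_of_isCompactOperator [ProperSpace 𝕜]
    (L K : E →L[𝕜] F) [FiniteDimensional 𝕜 L.ker] (hker : L.ker.ClosedComplemented)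
    (hrange : IsClosed (L.range : Set F)) (hK : IsCompactOperator K) :
    FiniteDimensional 𝕜 (L + K).ker := by
  obtain ⟨π, hπ⟩ := hker
  obtain ⟨S, hS⟩ := L.exists_comp_rangeRestrict_eq_sub hrange π hπ
  have := FiniteDimensional.proper 𝕜 L.ker
  set N := (L + K).ker
  have hLK (x : N) : L x = -K x := eq_neg_of_add_eq_zero_left x.2
  have hπ_compact : IsCompactOperator fun x : N => (π x : E) :=
    (isCompactOperator_of_locallyCompactSpace_dom (π ∘L N.subtypeL)).clm_comp L.ker.subtypeL
  have hL_compact : IsCompactOperator fun x : N => L.rangeRestrict x := by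
    have hmem (x : N) : -K x ∈ L.range := LinearMap.mem_range.2 ⟨x, hLK x⟩
    have hL : (fun x : N => L.rangeRestrict x) = fun x => ⟨-K x, hmem x⟩ :=
      funext fun x => Subtype.ext (hLK x)
    rw [hL]
    exact (hK.comp_clm N.subtypeL).neg.codRestrict hmem hrange
  have hN : (N.subtype : N → E) = fun x : N => (π x : E) + S (L.rangeRestrict x) :=
    funext fun x => by rw [hS, add_sub_cancel]; rfl
  have hN_compact : IsCompactOperator (N.subtype : N → E) :=
    hN ▸ hπ_compact.add (hL_compact.clm_comp S)
  exact .of_isCompactOperator_id (hN_compact.codRestrict (fun x => x.2) (L + K).isClosed_ker)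

end

theorem LinearMap.range_add_inf_le_map_ker_add_comp {R M N : Type*} [Ring R] [AddCommGroup M]
    [Module R M] [AddCommGroup N] [Module R N] (L K : M →ₗ[R] N) (P : N →ₗ[R] N)
    {Y₂ : Submodule R N} (hP_range : ∀ y ∈ L.range, P y = y) (hP_Y₂ : ∀ y ∈ Y₂, P y = 0) :
    (L + K).range ⊓ Y₂ ≤ (L + P ∘ₗ K).ker.map (L + K) := by
  rintro _ ⟨⟨x, rfl⟩, hx⟩
  refine ⟨x, ?_, rfl⟩
  have h : P ((L + K) x) = 0 := hP_Y₂ _ hx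
  simpa [hP_range (L x) (L.mem_range_self x)] using h

theorem LinearIndependent.exists_finset_forall_disjoint_span_image_inf_eq_bot {K V ι : Type*}
    [DivisionRing K] [AddCommGroup V] [Module K V] {z : ι → V} (hz : LinearIndependent K z)
    (R : Submodule K V) [FiniteDimensional K ↥(R ⊓ span K (range z))] :
    ∃ t : Finset ι, ∀ s : Set ι, Disjoint s t → span K (z '' s) ⊓ R = ⊥ := by
  have hcompact : IsCompactElement (R ⊓ span K (range z)) :=
    (fg_iff_compact _).1 (Module.Finite.iff_fg.1 inferInstance)
  obtain ⟨t, ht⟩ := CompleteLattice.IsCompactElement.exists_finset_of_le_iSup _ hcompact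
    (fun i => span K {z i}) (inf_le_right.trans span_range_eq_iSup.le)
  have ht' : R ⊓ span K (range z) ≤ span K (z '' t) :=
    ht.trans (iSup₂_le fun i hi => span_mono (singleton_subset_iff.2 (mem_image_of_mem z hi)))
  refine ⟨t, fun s hs => (Submodule.eq_bot_iff _).2 fun v hv => ?_⟩
  obtain ⟨hvs, hvR⟩ := mem_inf.1 hv
  have hvt : v ∈ span K (z '' t) := ht' ⟨hvR, span_mono (image_subset_range z s) hvs⟩
  exact Submodule.disjoint_def.1 (hz.disjoint_span_image hs) v hvs hvt

theorem stmt1_general {X Y : Type*} [NormedAddCommGroup X] [NormedSpace ℝ X] [CompleteSpace X]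
    [NormedAddCommGroup Y] [NormedSpace ℝ Y] [CompleteSpace Y]
    (L K : X →L[ℝ] Y) (Y₂ : Submodule ℝ Y)
    (hker_fin : FiniteDimensional ℝ (LinearMap.ker (L : X →ₗ[ℝ] Y)))
    (hker_compl : (LinearMap.ker (L : X →ₗ[ℝ] Y)).ClosedComplemented)
    (hran_closed : IsClosed (LinearMap.range (L : X →ₗ[ℝ] Y) : Set Y))
    (hY₂ : IsClosed (Y₂ : Set Y))
    (hcompl : IsCompl (LinearMap.range (L : X →ₗ[ℝ] Y)) Y₂)
    (z : ℕ → Y) (hz_indep : LinearIndependent ℝ z) (hzY₂ : ∀ n, z n ∈ Y₂)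
    (hK : IsCompactOperator (⇑K)) :
    FiniteDimensional ℝ ↥(LinearMap.range ((L + K : X →L[ℝ] Y) : X →ₗ[ℝ] Y) ⊓ Y₂) ∧
      ∀ p : ℕ, ∃ s : Finset ℕ, p < s.card ∧
        Submodule.span ℝ (z '' ↑s) ⊓ LinearMap.range ((L + K : X →L[ℝ] Y) : X →ₗ[ℝ] Y) = ⊥ := by
  have hP := hcompl.isTopCompl_of_isClosed hran_closed hY₂
  let P := L.range.projectionL Y₂ hP
  have hker : FiniteDimensional ℝ (L + P ∘L K).ker :=
    L.finiteDimensional_ker_add_of_isCompactOperator _ hker_compl hran_closed (hK.clm_comp P)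
  have hle : (L + K).range ⊓ Y₂ ≤ (L + P ∘L K).ker.map (L + K : X →ₗ[ℝ] Y) :=
    LinearMap.range_add_inf_le_map_ker_add_comp (L : X →ₗ[ℝ] Y) K P
      (fun y hy => L.range.projectionL_apply_left hP ⟨y, hy⟩)
      (fun y hy => L.range.projectionL_apply_right hP ⟨y, hy⟩)
  have hfin : FiniteDimensional ℝ ↥((L + K).range ⊓ Y₂) := Submodule.finiteDimensional_of_le hle
  refine ⟨hfin, fun p => ?_⟩
  have : FiniteDimensional ℝ ↥((L + K).range ⊓ span ℝ (range z)) :=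
    Submodule.finiteDimensional_of_le (inf_le_inf_left _ (span_le.2 (range_subset_iff.2 hzY₂)))
  obtain ⟨t, ht⟩ := hz_indep.exists_finset_forall_disjoint_span_image_inf_eq_bot (L + K).range
  refine ⟨Finset.range (t.card + p + 1) \ t, ?_, ht _ (Finset.disjoint_coe.2 Finset.sdiff_disjoint)⟩
  have := Finset.le_card_sdiff t (Finset.range (t.card + p + 1))
  rw [Finset.card_range] at this
  omega

/-- Selection of a large finite-dimensional subspace of a closed complement `Y₂` of the
range of a left-Fredholm operator `L`, transverse to the range of `L + K` for `K` compact. -/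
theorem stmt1 {X Y : Type*} [NormedAddCommGroup X] [NormedSpace ℝ X] [CompleteSpace X]
    [NormedAddCommGroup Y] [NormedSpace ℝ Y] [CompleteSpace Y]
    (L K : X →L[ℝ] Y) (Y₂ : Submodule ℝ Y)
    (hker_fin : FiniteDimensional ℝ (LinearMap.ker (L : X →ₗ[ℝ] Y)))
    (hker_compl : (LinearMap.ker (L : X →ₗ[ℝ] Y)).ClosedComplemented)
    (hran_closed : IsClosed (LinearMap.range (L : X →ₗ[ℝ] Y) : Set Y))
    (hran_compl : (LinearMap.range (L : X →ₗ[ℝ] Y)).ClosedComplemented)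
    (hY₂ : IsClosed (Y₂ : Set Y))
    (hcompl : IsCompl (LinearMap.range (L : X →ₗ[ℝ] Y)) Y₂)
    (z : ℕ → Y) (hz_indep : LinearIndependent ℝ z) (hzY₂ : ∀ n, z n ∈ Y₂)
    (hK : IsCompactOperator (⇑K)) :
    FiniteDimensional ℝ ↥(LinearMap.range ((L + K : X →L[ℝ] Y) : X →ₗ[ℝ] Y) ⊓ Y₂) ∧
      ∀ p : ℕ, ∃ s : Finset ℕ, p < s.card ∧
        Submodule.span ℝ (z '' ↑s) ⊓ LinearMap.range ((L + K : X →L[ℝ] Y) : X →ₗ[ℝ] Y) = ⊥ :=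
  stmt1_general L K Y₂ hker_fin hker_compl hran_closed hY₂ hcompl z hz_indep hzY₂ hK
end

section
/- Let G be a directed graph on cells {1,…,N} with cell dimensions d₁,…,d_N, and suppose there exists a nonempty set of cells I whose set of direct inputs J satisfies d_J < d_I. Then no admissible vector field f ∈ C_G has a simple equilibrium: for every f ∈ C_G and every x with f(x) = 0, the differential Df(x) : ℝ^d → ℝ^d is not surjective. -/
/-!
The `I`-components of an admissible `f` depend only on the `J`-coordinates, so along any direction
that leaves the `J`-coordinates fixed they are constant. Hence the `I`-block of `Df(x)` vanishes on
the kernel of the projection onto `ℝ^{d_J}`, i.e. it factors through `ℝ^{d_J}`, and so it cannot be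
onto `ℝ^{d_I}` when `d_J < d_I`; a fortiori `Df(x)` is not onto.
-/

open Module Function

theorem LinearMap.finrank_le_of_surjective_of_ker_le {K E F G : Type*} [Field K]
    [AddCommGroup E] [Module K E] [AddCommGroup F] [Module K F] [AddCommGroup G] [Module K G]
    [FiniteDimensional K G] {A : E →ₗ[K] F} (B : E →ₗ[K] G) (hA : Surjective A)
    (hker : LinearMap.ker B ≤ LinearMap.ker A) : finrank K F ≤ finrank K G :=
  calc finrank K F ≤ finrank K (LinearMap.range B) := by
        refine LinearMap.finrank_le_finrank_of_surjective
          (f := (LinearMap.ker B).liftQ A hker ∘ₗ B.quotKerEquivRange.symm.toLinearMap) ?_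
        rw [LinearMap.coe_comp, LinearEquiv.coe_coe]
        refine Surjective.comp ?_ B.quotKerEquivRange.symm.surjective
        rw [← LinearMap.range_eq_top, Submodule.range_liftQ, LinearMap.range_eq_top.2 hA]
    _ ≤ finrank K G := Submodule.finrank_le _

theorem ker_le_ker_fderiv_of_factorsThrough {𝕜 E F G : Type*} [NontriviallyNormedField 𝕜]
    [NormedAddCommGroup E] [NormedSpace 𝕜 E] [NormedAddCommGroup F] [NormedSpace 𝕜 F]
    [NormedAddCommGroup G] [NormedSpace 𝕜 G] {φ : E → F} {x : E} (P : E →L[𝕜] G)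
    (hφ : φ.FactorsThrough P) (hd : DifferentiableAt 𝕜 φ x) :
    LinearMap.ker (P : E →ₗ[𝕜] G) ≤ LinearMap.ker (fderiv 𝕜 φ x : E →ₗ[𝕜] F) := by
  intro v hv
  have hline : (fun t : 𝕜 => φ (x + t • v)) = fun _ => φ x :=
    funext fun t => hφ (by simp [show P v = 0 from hv])
  rw [LinearMap.mem_ker, ContinuousLinearMap.coe_coe, ← hd.lineDeriv_eq_fderiv, lineDeriv, hline,
    deriv_const]

section restrict

variable {𝕜 ι : Type*} [NontriviallyNormedField 𝕜] {E : ι → Type*}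
  [∀ i, NormedAddCommGroup (E i)] [∀ i, NormedSpace 𝕜 (E i)]

variable (𝕜 E) in
def Finset.restrictCLM (s : Finset ι) : ((i : ι) → E i) →L[𝕜] ((i : s) → E i) :=
  ContinuousLinearMap.pi fun i => ContinuousLinearMap.proj (i : ι)

theorem Finset.restrictCLM_surjective [DecidableEq ι] (s : Finset ι) :
    Surjective (s.restrictCLM 𝕜 E) := fun v =>
  ⟨fun i => if h : i ∈ s then v ⟨i, h⟩ else 0, funext fun i => by simp [restrictCLM, i.2]⟩

end restrict

theorem Finset.finrank_pi_fin_fun {K ι : Type*} [Field K] (d : ι → ℕ) (s : Finset ι) :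
    finrank K ((i : s) → Fin (d i) → K) = ∑ i ∈ s, d i := by
  rw [Module.finrank_pi_fintype]
  simp only [Module.finrank_fin_fun]
  exact Finset.sum_coe_sort s d

theorem stmt5_general {N : ℕ} (d : Fin N → ℕ) (arrow : Fin N → Fin N → Prop)
    (I J : Finset (Fin N))
    (hJ : ∀ j, j ∈ J ↔ ∃ i ∈ I, arrow j i)
    (hdim : ∑ j ∈ J, d j < ∑ i ∈ I, d i)
    (f : ((i : Fin N) → (Fin (d i) → ℝ)) → ((i : Fin N) → (Fin (d i) → ℝ)))
    (hf : ContDiff ℝ 1 f)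
    (hadm : ∀ x y, ∀ i : Fin N, (∀ j, arrow j i → x j = y j) → f x i = f y i)
    (x : (i : Fin N) → (Fin (d i) → ℝ)) :
    ¬ Function.Surjective (fderiv ℝ f x) := by
  intro hsurj
  let πI := I.restrictCLM ℝ fun i => Fin (d i) → ℝ
  let πJ := J.restrictCLM ℝ fun i => Fin (d i) → ℝ
  have hfx : DifferentiableAt ℝ f x := hf.differentiable one_ne_zero x
  have hfactor : (πI ∘ f).FactorsThrough πJ := fun y z hyz => funext fun i =>
    hadm y z i fun j hj => congrFun hyz ⟨j, (hJ j).2 ⟨i, i.2, hj⟩⟩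
  have hker := ker_le_ker_fderiv_of_factorsThrough πJ hfactor (πI.differentiableAt.comp x hfx)
  rw [fderiv_comp x πI.differentiableAt hfx, πI.fderiv] at hker
  have hA : Surjective (πI.comp (fderiv ℝ f x)) :=
    (Finset.restrictCLM_surjective (𝕜 := ℝ) I).comp hsurj
  have hle := LinearMap.finrank_le_of_surjective_of_ker_le _ hA hker
  rw [Finset.finrank_pi_fin_fun, Finset.finrank_pi_fin_fun] at hle
  omega

/-- In a coupled cell network whose graph admits a set of cells `I` whose set of direct
inputs `J` satisfies `d_J < d_I`, no admissible vector field has a simple equilibrium. -/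
theorem stmt5 {N : ℕ} (d : Fin N → ℕ) (arrow : Fin N → Fin N → Prop)
    (I J : Finset (Fin N)) (hIne : I.Nonempty)
    (hJ : ∀ j, j ∈ J ↔ ∃ i ∈ I, arrow j i)
    (hdim : ∑ j ∈ J, d j < ∑ i ∈ I, d i)
    (f : ((i : Fin N) → (Fin (d i) → ℝ)) → ((i : Fin N) → (Fin (d i) → ℝ)))
    (hf : ContDiff ℝ 1 f)
    (hadm : ∀ x y, ∀ i : Fin N, (∀ j, arrow j i → x j = y j) → f x i = f y i)
    (x : (i : Fin N) → (Fin (d i) → ℝ)) (hx : f x = 0) :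
    ¬ Function.Surjective (fderiv ℝ f x) :=
  stmt5_general d arrow I J hJ hdim f hf hadm x
end

section
/- If a cell i of the directed graph G has no incoming arrows (no direct inputs) and dᵢ ≥ 1, then no admissible vector field f ∈ C_G has a simple equilibrium point. -/
/-! A cell without inputs has a constant component of the vector field, so the `i₀`-row of the
Jacobian vanishes identically and the Jacobian cannot be onto the nonzero factor at `i₀`. -/

variable {𝕜 : Type*} [NontriviallyNormedField 𝕜] {E : Type*} [NormedAddCommGroup E]
  [NormedSpace 𝕜 E] {ι : Type*} {F : ι → Type*} [∀ i, NormedAddCommGroup (F i)]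
  [∀ i, NormedSpace 𝕜 (F i)]

theorem fderiv_apply_eq_zero_of_forall_apply_eq {f : E → ∀ i, F i} {i : ι}
    (hf : ∀ y z, f y i = f z i) (x u : E) : fderiv 𝕜 f x u i = 0 := by
  by_cases hdf : DifferentiableAt 𝕜 f x
  · have hconst : (fun y => f y i) = fun _ => f x i := funext fun y => hf y x
    have hcomp := fderiv_apply hdf i
    rw [hconst, fderiv_fun_const] at hcomp
    simpa using (congrArg (· u) hcomp).symm
  · simp [fderiv_zero_of_not_differentiableAt hdf]

theorem not_surjective_fderiv_of_forall_apply_eq [DecidableEq ι] {f : E → ∀ i, F i} {i : ι}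
    [Nontrivial (F i)] (hf : ∀ y z, f y i = f z i) (x : E) :
    ¬ Function.Surjective (fderiv 𝕜 f x) := by
  intro hsurj
  obtain ⟨v, hv⟩ := exists_ne (0 : F i)
  obtain ⟨u, hu⟩ := hsurj (Pi.single i v)
  apply hv
  simpa [hu] using fderiv_apply_eq_zero_of_forall_apply_eq (𝕜 := 𝕜) hf x u

theorem stmt6_general {N : ℕ} (d : Fin N → ℕ) (arrow : Fin N → Fin N → Prop)
    (i₀ : Fin N) (hno : ∀ j, ¬ arrow j i₀) (hd : 1 ≤ d i₀)
    (f : ((i : Fin N) → (Fin (d i) → ℝ)) → ((i : Fin N) → (Fin (d i) → ℝ)))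
    (hadm : ∀ x y, ∀ i : Fin N, (∀ j, arrow j i → x j = y j) → f x i = f y i) :
    ¬ ∃ x : (i : Fin N) → (Fin (d i) → ℝ),
        f x = 0 ∧ Function.Surjective (fderiv ℝ f x) := by
  rintro ⟨x, -, hsurj⟩
  have : Nonempty (Fin (d i₀)) := ⟨⟨0, hd⟩⟩
  have hconst : ∀ y z, f y i₀ = f z i₀ := fun y z => hadm y z i₀ fun j hj => (hno j hj).elim
  exact not_surjective_fderiv_of_forall_apply_eq hconst x hsurj

/-- If a cell `i₀` of the graph has no incoming arrows and dimension at least 1, then no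
admissible vector field of the coupled cell network has a simple equilibrium point. -/
theorem stmt6 {N : ℕ} (d : Fin N → ℕ) (arrow : Fin N → Fin N → Prop)
    (i₀ : Fin N) (hno : ∀ j, ¬ arrow j i₀) (hd : 1 ≤ d i₀)
    (f : ((i : Fin N) → (Fin (d i) → ℝ)) → ((i : Fin N) → (Fin (d i) → ℝ)))
    (hf : ContDiff ℝ 1 f)
    (hadm : ∀ x y, ∀ i : Fin N, (∀ j, arrow j i → x j = y j) → f x i = f y i) :
    ¬ ∃ x : (i : Fin N) → (Fin (d i) → ℝ),
        f x = 0 ∧ Function.Surjective (fderiv ℝ f x) :=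
  stmt6_general d arrow i₀ hno hd f hadm
end
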